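/- If points-to analysis is sound, it overapproximates the basic translation's method choices pointwise: whenever the basic translation at an application x M considers the set R ↾ θ of all repository methods of the type θ of x, and PT computes pt(x) ⊆ dom(R ↾ θ), then every method name m that can actually be the value of x in some evaluation satisfying the path condition lies in pt(x); consequently restricting the decision tree in ψ from R ↾ θ to pt(x) preserves the soundness theorem. -/

import Mathlib

namespace HORef

/-- Types of HORef. -/
inductive Ty : Type where
  | unit | int
  | prod : Ty → Ty → Ty
  | arrow : Ty → Ty → Ty
deriving DecidableEq

/-- Variables, references and method names are typed: the `Ty` tag gives the type. -/
abbrev VName := ℕ × Ty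
abbrev RName := ℕ × Ty
abbrev MName := ℕ × Ty × Ty

def Ty.isGround : Ty → Prop
  | .unit => True
  | .int  => True
  | _ => False

/-- Terms of HORef (extended with `nil` and stuck applications of fail/nil, used
for extended terms). `lam x τ M` is `λx.M` with result-type annotation `τ`. -/
inductive Tm : Type where
  | fail | nil | unit
  | var (x : VName) | meth (m : MName) | intl (i : ℤ)
  | assign (r : RName) (M : Tm) | deref (r : RName)
  | op (M N : Tm)
  | pair (M N : Tm) | proj1 (M : Tm) | proj2 (M : Tm)
  | appVar (x : VName) (M : Tm) | appMeth (m : MName) (M : Tm)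
  | appFail (M : Tm) | appNil (M : Tm)
  | ite (B M1 M0 : Tm)
  | lett (x : VName) (M N : Tm)
  | letrec (f x : VName) (M N : Tm)
  | lam (x : VName) (τ : Ty) (M : Tm)
deriving DecidableEq

/-- Values. -/
inductive Val : Type where
  | var (x : VName) | meth (m : MName) | intl (i : ℤ) | unit
  | pair (v w : Val)
deriving DecidableEq

def Val.toTm : Val → Tm
  | .var x => .var x
  | .meth m => .meth m
  | .intl i => .intl i
  | .unit => .unit
  | .pair v w => .pair v.toTm w.toTm

/-- Results χ ∈ Vals ∪ {fail, nil}. -/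
inductive Res : Type where
  | val (v : Val) | fail | nil
deriving DecidableEq

def Res.toTm : Res → Tm
  | .val v => v.toTm
  | .fail => .fail
  | .nil => .nil

/-- Substitution of a value for a variable. -/
def Tm.subst (x : VName) (v : Val) : Tm → Tm
  | .fail => .fail
  | .nil => .nil
  | .unit => .unit
  | .var y => if y = x then v.toTm else .var y
  | .meth m => .meth m
  | .intl i => .intl i
  | .assign r M => .assign r (M.subst x v)
  | .deref r => .deref r
  | .op M N => .op (M.subst x v) (N.subst x v)
  | .pair M N => .pair (M.subst x v) (N.subst x v)
  | .proj1 M => .proj1 (M.subst x v)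
  | .proj2 M => .proj2 (M.subst x v)
  | .appVar y M =>
      if y = x then
        match v with
        | .var z => .appVar z (M.subst x v)
        | .meth m => .appMeth m (M.subst x v)
        | _ => .appVar y (M.subst x v)
      else .appVar y (M.subst x v)
  | .appMeth m M => .appMeth m (M.subst x v)
  | .appFail M => .appFail (M.subst x v)
  | .appNil M => .appNil (M.subst x v)
  | .ite B M1 M0 => .ite (B.subst x v) (M1.subst x v) (M0.subst x v)
  | .lett y M N => .lett y (M.subst x v) (if y = x then N else N.subst x v)
  | .letrec f y M N =>
      .letrec f y (if f = x ∨ y = x then M else M.subst x v)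
        (if f = x then N else N.subst x v)
  | .lam y τ M => .lam y τ (if y = x then M else M.subst x v)

/-- Free variables. -/
def Tm.fv : Tm → Finset VName
  | .var x => {x}
  | .appVar x M => insert x M.fv
  | .assign _ M | .proj1 M | .proj2 M | .appMeth _ M | .appFail M | .appNil M => M.fv
  | .op M N | .pair M N => M.fv ∪ N.fv
  | .ite B M1 M0 => B.fv ∪ M1.fv ∪ M0.fv
  | .lett x M N => M.fv ∪ (N.fv.erase x)
  | .letrec f x M N => ((M.fv.erase f).erase x) ∪ (N.fv.erase f)
  | .lam x _ M => M.fv.erase x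
  | _ => ∅

/-- Method names occurring in a term. -/
def Tm.meths : Tm → Finset MName
  | .meth m => {m}
  | .appMeth m M => insert m M.meths
  | .assign _ M | .proj1 M | .proj2 M | .appVar _ M | .appFail M | .appNil M
  | .lam _ _ M => M.meths
  | .op M N | .pair M N | .lett _ M N | .letrec _ _ M N => M.meths ∪ N.meths
  | .ite B M1 M0 => B.meths ∪ M1.meths ∪ M0.meths
  | _ => ∅

/-- References occurring in a term. -/
def Tm.refs : Tm → Finset RName
  | .assign r M => insert r M.refs
  | .deref r => {r}
  | .proj1 M | .proj2 M | .appVar _ M | .appMeth _ M | .appFail M | .appNil M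
  | .lam _ _ M => M.refs
  | .op M N | .pair M N | .lett _ M N | .letrec _ _ M N => M.refs ∪ N.refs
  | .ite B M1 M0 => B.refs ∪ M1.refs ∪ M0.refs
  | _ => ∅

def Val.meths : Val → Finset MName
  | .meth m => {m}
  | .pair v w => v.meths ∪ w.meths
  | _ => ∅

def Val.fv : Val → Finset VName
  | .var x => {x}
  | .pair v w => v.fv ∪ w.fv
  | _ => ∅

/-- Method repositories and stores, as (finite) association lists. -/
abbrev Rep := List (MName × VName × Tm)
abbrev Store := List (RName × Val)

def repDom (R : Rep) : Set MName := {m | R.lookup m ≠ none}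
def storeDom (S : Store) : Set RName := {r | S.lookup r ≠ none}

/-- Containment of repositories. -/
def RepLe (R1 R2 : Rep) : Prop := ∀ m v, R1.lookup m = some v → R2.lookup m = some v

/-- Bounds k ∈ {nil} ∪ ℕ. -/
inductive Bnd : Type where
  | nil | fin (k : ℕ)
deriving DecidableEq

/-- Decrementing the bound; beyond zero gives nil. -/
def Bnd.pred : Bnd → Bnd
  | .nil => .nil
  | .fin 0 => .nil
  | .fin (k+1) => .fin k

end HORef
namespace HORef

/-- Bounded big-step operational semantics of HORef (Figure 2). -/
inductive Eval : Tm → Rep → Store → Bnd → Res → Rep → Store → Prop where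
  | bnd : Eval M R S .nil .nil R S
  | failE : Eval .fail R S (.fin k) .fail R S
  | valE (v : Val) : Eval v.toTm R S (.fin k) (.val v) R S
  | drf : S.lookup r = some v → Eval (.deref r) R S (.fin k) (.val v) R S
  | lamE : R.lookup m = none →
      Eval (.lam x τ M) R S (.fin k) (.val (.meth m)) ((m, (x, M)) :: R) S
  | proj1E : Eval M R S (.fin k) (.val (.pair v1 v2)) R' S' →
      Eval (.proj1 M) R S (.fin k) (.val v1) R' S'
  | proj2E : Eval M R S (.fin k) (.val (.pair v1 v2)) R' S' →
      Eval (.proj2 M) R S (.fin k) (.val v2) R' S'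
  | proj1Ab : Eval M R S (.fin k) χ R' S' → (χ = .fail ∨ χ = .nil) →
      Eval (.proj1 M) R S (.fin k) χ R' S'
  | proj2Ab : Eval M R S (.fin k) χ R' S' → (χ = .fail ∨ χ = .nil) →
      Eval (.proj2 M) R S (.fin k) χ R' S'
  | assignE : Eval M R S (.fin k) (.val v) R' S' →
      Eval (.assign r M) R S (.fin k) (.val .unit) R' ((r, v) :: S')
  | assignAb : Eval M R S (.fin k) χ R' S' → (χ = .fail ∨ χ = .nil) →
      Eval (.assign r M) R S (.fin k) χ R' S'
  | opE : Eval M1 R S (.fin k) (.val (.intl i1)) R1 S1 →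
      Eval M2 R1 S1 (.fin k) (.val (.intl i2)) R2 S2 →
      Eval (.op M1 M2) R S (.fin k) (.val (.intl (i1 + i2))) R2 S2
  | opAb1 : Eval M1 R S (.fin k) χ R1 S1 → (χ = .fail ∨ χ = .nil) →
      Eval (.op M1 M2) R S (.fin k) χ R1 S1
  | opAb2 : Eval M1 R S (.fin k) (.val (.intl i1)) R1 S1 →
      Eval M2 R1 S1 (.fin k) χ R2 S2 → (χ = .fail ∨ χ = .nil) →
      Eval (.op M1 M2) R S (.fin k) χ R2 S2
  | pairE : Eval M1 R S (.fin k) (.val v1) R1 S1 →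
      Eval M2 R1 S1 (.fin k) (.val v2) R2 S2 →
      Eval (.pair M1 M2) R S (.fin k) (.val (.pair v1 v2)) R2 S2
  | pairAb1 : Eval M1 R S (.fin k) χ R1 S1 → (χ = .fail ∨ χ = .nil) →
      Eval (.pair M1 M2) R S (.fin k) χ R1 S1
  | pairAb2 : Eval M1 R S (.fin k) (.val v1) R1 S1 →
      Eval M2 R1 S1 (.fin k) χ R2 S2 → (χ = .fail ∨ χ = .nil) →
      Eval (.pair M1 M2) R S (.fin k) χ R2 S2
  | letE : Eval M R S (.fin k) (.val v) R' S' →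
      Eval (N.subst x v) R' S' (.fin k) χ R'' S'' →
      Eval (.lett x M N) R S (.fin k) χ R'' S''
  | letAb : Eval M R S (.fin k) χ R' S' → (χ = .fail ∨ χ = .nil) →
      Eval (.lett x M N) R S (.fin k) χ R' S'
  | appE : R.lookup m = some (x, N) →
      Eval M R S (.fin k) (.val v) R' S' →
      Eval (N.subst x v) R' S' (Bnd.fin k).pred χ R'' S'' →
      Eval (.appMeth m M) R S (.fin k) χ R'' S''
  | appAb : Eval M R S (.fin k) χ R' S' → (χ = .fail ∨ χ = .nil) →
      Eval (.appMeth m M) R S (.fin k) χ R' S'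
  | iteT : Eval B R S (.fin k) (.val (.intl i)) Rb Sb → i ≠ 0 →
      Eval M1 Rb Sb (.fin k) χ R' S' →
      Eval (.ite B M1 M0) R S (.fin k) χ R' S'
  | iteF : Eval B R S (.fin k) (.val (.intl 0)) Rb Sb →
      Eval M0 Rb Sb (.fin k) χ R' S' →
      Eval (.ite B M1 M0) R S (.fin k) χ R' S'
  | iteAb : Eval B R S (.fin k) χ Rb Sb → (χ = .fail ∨ χ = .nil) →
      Eval (.ite B M1 M0) R S (.fin k) χ Rb Sb
  | letrecE : R.lookup m = none →
      Eval (N.subst f (.meth m)) ((m, (x, M.subst f (.meth m))) :: R) S (.fin k) χ R' S' →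
      Eval (.letrec f x M N) R S (.fin k) χ R' S'

/-- Typing of HORef terms (Figure 1). -/
inductive HasTy : Tm → Ty → Prop where
  | fail (θ : Ty) : HasTy .fail θ
  | unit : HasTy .unit .unit
  | intl (i : ℤ) : HasTy (.intl i) .int
  | var (x : VName) : HasTy (.var x) x.2
  | meth (m : MName) : HasTy (.meth m) (.arrow m.2.1 m.2.2)
  | op : HasTy M .int → HasTy N .int → HasTy (.op M N) .int
  | ite : HasTy B .int → HasTy M1 θ → HasTy M0 θ → HasTy (.ite B M1 M0) θ
  | pair : HasTy M θ1 → HasTy N θ2 → HasTy (.pair M N) (.prod θ1 θ2)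
  | proj1 : HasTy M (.prod θ1 θ2) → HasTy (.proj1 M) θ1
  | proj2 : HasTy M (.prod θ1 θ2) → HasTy (.proj2 M) θ2
  | deref (r : RName) : HasTy (.deref r) r.2
  | assign : HasTy M r.2 → HasTy (.assign r M) .unit
  | lam : HasTy M τ → HasTy (.lam x τ M) (.arrow x.2 τ)
  | lett : HasTy M x.2 → HasTy N θ' → HasTy (.lett x M N) θ'
  | letrec : f.2 = .arrow x.2 θ' → HasTy M θ' → HasTy N θ'' →
      HasTy (.letrec f x M N) θ''
  | appVar : x.2 = .arrow θ θ' → HasTy M θ → HasTy (.appVar x M) θ'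
  | appMeth (m : MName) : HasTy M m.2.1 → HasTy (.appMeth m M) m.2.2

/-- Validity of a configuration: all methods and references appearing in
`M`, `R`, `S` are in the domains of `R`, `S` respectively. -/
def ValidCfg (M : Tm) (R : Rep) (S : Store) : Prop :=
  (∀ m ∈ M.meths, m ∈ repDom R) ∧ (∀ r ∈ M.refs, r ∈ storeDom S) ∧
  (∀ p ∈ R, (∀ m ∈ Tm.meths p.2.2, m ∈ repDom R) ∧
            (∀ r ∈ Tm.refs p.2.2, r ∈ storeDom S)) ∧
  (∀ p ∈ S, ∀ m ∈ Val.meths p.2, m ∈ repDom R)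

/-- Well-typedness and closedness of the repository: each `m ↦ λx.M` has
`m : θ → θ'`, `x : θ`, `M : θ'`, and `M` has no free variables besides `x`. -/
def WfRep (R : Rep) : Prop :=
  ∀ p ∈ R, HasTy p.2.2 p.1.2.2 ∧ p.2.1.2 = p.1.2.1 ∧ Tm.fv p.2.2 ⊆ {p.2.1}

/-- Well-typedness and closedness of the store. -/
def WfStore (S : Store) : Prop :=
  ∀ p ∈ S, HasTy (Val.toTm p.2) p.1.2 ∧ Val.fv p.2 = ∅

/-- Finite type-preserving permutations of method names. -/
structure MPerm where
  toEquiv : Equiv.Perm MName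
  finite : {m : MName | toEquiv m ≠ m}.Finite
  typed : ∀ m : MName, (toEquiv m).2 = m.2

def MPerm.app (π : MPerm) (m : MName) : MName := π.toEquiv m

def permVal (π : MPerm) : Val → Val
  | .meth m => .meth (π.app m)
  | .pair v w => .pair (permVal π v) (permVal π w)
  | v => v

def permTm (π : MPerm) : Tm → Tm
  | .meth m => .meth (π.app m)
  | .appMeth m M => .appMeth (π.app m) (permTm π M)
  | .assign r M => .assign r (permTm π M)
  | .op M N => .op (permTm π M) (permTm π N)
  | .pair M N => .pair (permTm π M) (permTm π N)
  | .proj1 M => .proj1 (permTm π M)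
  | .proj2 M => .proj2 (permTm π M)
  | .appVar x M => .appVar x (permTm π M)
  | .appFail M => .appFail (permTm π M)
  | .appNil M => .appNil (permTm π M)
  | .ite B M1 M0 => .ite (permTm π B) (permTm π M1) (permTm π M0)
  | .lett x M N => .lett x (permTm π M) (permTm π N)
  | .letrec f x M N => .letrec f x (permTm π M) (permTm π N)
  | .lam x τ M => .lam x τ (permTm π M)
  | M => M

def permRes (π : MPerm) : Res → Res
  | .val v => .val (permVal π v)
  | χ => χ

def permRep (π : MPerm) (R : Rep) : Rep :=
  R.map (fun p => (π.app p.1, (p.2.1, permTm π p.2.2)))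

def permStore (π : MPerm) (S : Store) : Store :=
  S.map (fun p => (p.1, permVal π p.2))

/-- Nominal equivalence up to the names in Δ, on result triples. -/
def NomEquiv (Δ : Set MName) (a b : Res × Rep × Store) : Prop :=
  ∃ π : MPerm, (∀ m ∈ Δ, π.app m = m) ∧
    (permRes π a.1, permRep π a.2.1, permStore π a.2.2) = b

/-- Nominal equivalence up to Δ, on results. -/
def ResNomEquiv (Δ : Set MName) (χ χ' : Res) : Prop :=
  ∃ π : MPerm, (∀ m ∈ Δ, π.app m = m) ∧ permRes π χ = χ'

end HORef
namespace HORef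

/-- Expressions of the propositional (SMT) language. -/
inductive Xp : Type where
  | var (x : VName) | meth (m : MName) | intl (i : ℤ) | unit | fail | nil
  | pair (a b : Xp) | proj1 (a : Xp) | proj2 (a : Xp) | add (a b : Xp)
deriving DecidableEq

/-- Propositional formulas. -/
inductive Form : Type where
  | tt
  | eq (a b : Xp)
  | and (p q : Form) | or (p q : Form) | imp (p q : Form) | not (p : Form)
deriving DecidableEq

def valXp : Val → Xp
  | .var x => .var x
  | .meth m => .meth m
  | .intl i => .intl i
  | .unit => .unit
  | .pair v w => .pair (valXp v) (valXp w)

def resXp : Res → Xp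
  | .val v => valXp v
  | .fail => .fail
  | .nil => .nil

/-- Extended assignments: variables to closed values or fail/nil. -/
abbrev Assign := VName → Option Res

def evalXp (σ : Assign) : Xp → Option Res
  | .var x => σ x
  | .meth m => some (.val (.meth m))
  | .intl i => some (.val (.intl i))
  | .unit => some (.val .unit)
  | .fail => some .fail
  | .nil => some .nil
  | .pair a b =>
      match evalXp σ a, evalXp σ b with
      | some (.val v), some (.val w) => some (.val (.pair v w))
      | _, _ => none
  | .proj1 a =>
      match evalXp σ a with
      | some (.val (.pair v _)) => some (.val v)
      | _ => none
  | .proj2 a =>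
      match evalXp σ a with
      | some (.val (.pair _ w)) => some (.val w)
      | _ => none
  | .add a b =>
      match evalXp σ a, evalXp σ b with
      | some (.val (.intl i)), some (.val (.intl j)) => some (.val (.intl (i + j)))
      | _, _ => none

/-- Satisfaction of a formula by an assignment. -/
def sat (σ : Assign) : Form → Prop
  | .tt => True
  | .eq a b => ∃ c, evalXp σ a = some c ∧ evalXp σ b = some c
  | .and p q => sat σ p ∧ sat σ q
  | .or p q => sat σ p ∨ sat σ q
  | .imp p q => sat σ p → sat σ q
  | .not p => ¬ sat σ p

def Entails (φ ψ : Form) : Prop := ∀ σ, sat σ φ → sat σ ψ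

/-- σ represents φ (written σ ≃ φ): σ satisfies φ, and φ implies x = σ(x)
for every x in the domain of σ. -/
def Represents (σ : Assign) (φ : Form) : Prop :=
  sat σ φ ∧ ∀ x ρ, σ x = some ρ → Entails φ (.eq (.var x) (resXp ρ))

def AssignLe (σ σ' : Assign) : Prop := ∀ x ρ, σ x = some ρ → σ' x = some ρ

/-- The guard predicate F a b P. -/
def Fg (a b : VName) (P : Form) : Form :=
  .and (.imp (.eq (.var a) .fail) (.eq (.var b) .fail))
    (.and (.imp (.eq (.var a) .nil) (.eq (.var b) .nil))
      (.or (.eq (.var a) .fail) (.or (.eq (.var a) .nil) P)))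

/-- SSA maps. -/
abbrev SSA := RName → VName

/-- Deterministic fresh-variable generator (from a counter). -/
def fvar (n : ℕ) : VName := (n, Ty.unit)

/-- Increment all references in `Rs` with fresh SSA variables. -/
def updAll : SSA → List RName → ℕ → SSA × ℕ
  | C, [], n => (C, n)
  | C, r :: rs, n => updAll (Function.update C r (n, r.2)) rs (n + 1)

/-- The clauses ⋀_{r ∈ Rs} (C'(r) = D(r)). -/
def conjStores (C' D : SSA) (Rs : List RName) : Form :=
  Rs.foldr (fun r acc => .and (.eq (.var (C' r)) (.var (D r))) acc) .tt

def arrowTag : Ty → Ty × Ty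
  | .arrow a b => (a, b)
  | t => (t, t)

/-- The n-ary decision tree ψ of the non-deterministic application case. -/
def mkPsi (x ret : VName) (C' : SSA) (Rs : List RName) :
    List (MName × VName × Tm) → List (VName × SSA) → Form
  | m :: ms, (ri, Di) :: rest =>
      .and (.imp (.eq (.var x) (.meth m.1))
              (.and (Fg ri ret (.eq (.var ret) (.var ri))) (conjStores C' Di Rs)))
        (mkPsi x ret C' Rs ms rest)
  | _, _ => .tt

mutual
/-- The BMC translation of Section 3, as an inductive relation
`Trans Rs M R C D φ k n (ret, φ', R', C', D', n')`, where `Rs` is the common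
domain of the SSA maps and `n`, `n'` thread the deterministic fresh-name
generator. -/
inductive Trans (Rs : List RName) :
    Tm → Rep → SSA → SSA → Form → Bnd → ℕ →
    VName × Form × Rep × SSA × SSA × ℕ → Prop where
  | bnd : Trans Rs M R C D φ .nil n
      (fvar n, .and (.eq (.var (fvar n)) .nil) φ, R, C, D, n + 1)
  | failT : Trans Rs .fail R C D φ (.fin k) n
      (fvar n, .and (.eq (.var (fvar n)) .fail) φ, R, C, D, n + 1)
  | unitT : Trans Rs .unit R C D φ (.fin k) n
      (fvar n, .and (.eq (.var (fvar n)) .unit) φ, R, C, D, n + 1)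
  | intT : Trans Rs (.intl i) R C D φ (.fin k) n
      (fvar n, .and (.eq (.var (fvar n)) (.intl i)) φ, R, C, D, n + 1)
  | varT : Trans Rs (.var x) R C D φ (.fin k) n
      (fvar n, .and (.eq (.var (fvar n)) (.var x)) φ, R, C, D, n + 1)
  | methT : Trans Rs (.meth m) R C D φ (.fin k) n
      (fvar n, .and (.eq (.var (fvar n)) (.meth m)) φ, R, C, D, n + 1)
  | drfT : Trans Rs (.deref r) R C D φ (.fin k) n
      (fvar n, .and (.eq (.var (fvar n)) (.var (D r))) φ, R, C, D, n + 1)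
  | lamT : Trans Rs (.lam x τ M) R C D φ (.fin k) n
      (fvar (n + 1), .and (.eq (.var (fvar (n + 1))) (.meth (n, x.2, τ))) φ,
        ((n, x.2, τ), (x, M)) :: R, C, D, n + 2)
  | proj1T : Trans Rs M R C D φ (.fin k) n (r1, φ1, R1, C1, D1, n1) →
      Trans Rs (.proj1 M) R C D φ (.fin k) n
        (fvar n1,
          .and (Fg r1 (fvar n1) (.eq (.var (fvar n1)) (.proj1 (.var r1)))) φ1,
          R1, C1, D1, n1 + 1)
  | proj2T : Trans Rs M R C D φ (.fin k) n (r1, φ1, R1, C1, D1, n1) →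
      Trans Rs (.proj2 M) R C D φ (.fin k) n
        (fvar n1,
          .and (Fg r1 (fvar n1) (.eq (.var (fvar n1)) (.proj2 (.var r1)))) φ1,
          R1, C1, D1, n1 + 1)
  | assignT : Trans Rs M R C D φ (.fin k) n (r1, φ1, R1, C1, D1, n1) →
      Trans Rs (.assign r M) R C D φ (.fin k) n
        (fvar (n1 + 1),
          .and (Fg r1 (fvar (n1 + 1))
            (.and (.eq (.var (fvar (n1 + 1))) .unit)
                  (.eq (.var (n1, r.2)) (.var r1)))) φ1,
          R1, Function.update C1 r (n1, r.2), Function.update D1 r (n1, r.2),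
          n1 + 2)
  | opT : Trans Rs M1 R C D φ (.fin k) n (r1, φ1, R1, C1, D1, n1) →
      Trans Rs M2 R1 C1 D1 φ1 (.fin k) n1 (r2, φ2, R2, C2, D2, n2) →
      Trans Rs (.op M1 M2) R C D φ (.fin k) n
        (fvar n2,
          .and (Fg r1 (fvar n2) (Fg r2 (fvar n2)
            (.eq (.var (fvar n2)) (.add (.var r1) (.var r2))))) φ2,
          R2, C2, D2, n2 + 1)
  | pairT : Trans Rs M1 R C D φ (.fin k) n (r1, φ1, R1, C1, D1, n1) →
      Trans Rs M2 R1 C1 D1 φ1 (.fin k) n1 (r2, φ2, R2, C2, D2, n2) →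
      Trans Rs (.pair M1 M2) R C D φ (.fin k) n
        (fvar n2,
          .and (Fg r1 (fvar n2) (Fg r2 (fvar n2)
            (.eq (.var (fvar n2)) (.pair (.var r1) (.var r2))))) φ2,
          R2, C2, D2, n2 + 1)
  | letT : Trans Rs M R C D φ (.fin k) n (r1, φ1, R1, C1, D1, n1) →
      Trans Rs (N.subst x (.var r1)) R1 C1 D1 φ1 (.fin k) n1 (r2, φ2, R2, C2, D2, n2) →
      Trans Rs (.lett x M N) R C D φ (.fin k) n
        (fvar n2,
          .and (Fg r1 (fvar n2) (Fg r2 (fvar n2) (.eq (.var (fvar n2)) (.var r2)))) φ2,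
          R2, C2, D2, n2 + 1)
  | letrecT :
      Trans Rs (N.subst f (.var (n + 1, f.2)))
        (((n, arrowTag f.2), (x, M.subst f (.meth (n, arrowTag f.2)))) :: R)
        C D (.and (.eq (.var (n + 1, f.2)) (.meth (n, arrowTag f.2))) φ)
        (.fin k) (n + 2) out →
      Trans Rs (.letrec f x M N) R C D φ (.fin k) n out
  | appMethT : R.lookup m = some (x, N) →
      Trans Rs M R C D φ (.fin k) n (r1, φ1, R1, C1, D1, n1) →
      Trans Rs (N.subst x (.var r1)) R1 C1 D1 φ1 (Bnd.fin k).pred n1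
        (r2, φ2, R2, C2, D2, n2) →
      Trans Rs (.appMeth m M) R C D φ (.fin k) n
        (fvar n2,
          .and (Fg r1 (fvar n2) (Fg r2 (fvar n2) (.eq (.var (fvar n2)) (.var r2)))) φ2,
          R2, C2, D2, n2 + 1)
  | iteT : Trans Rs B R C D φ (.fin k) n (rb, φb, Rb, Cb, Db, nb) →
      Trans Rs M0 Rb Cb Db φb (.fin k) nb (r0, φ0, R0, C0, D0, n0) →
      Trans Rs M1 R0 C0 Db φ0 (.fin k) n0 (r1, φ1, R1, C1, D1, n1) →
      updAll C1 Rs n1 = (C', n') →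
      Trans Rs (.ite B M1 M0) R C D φ (.fin k) n
        (fvar n',
          .and (Fg rb (fvar n')
            (.and (.imp (.eq (.var rb) (.intl 0))
                     (Fg r0 (fvar n')
                       (.and (.eq (.var (fvar n')) (.var r0)) (conjStores C' D0 Rs))))
                  (.imp (.not (.eq (.var rb) (.intl 0)))
                     (Fg r1 (fvar n')
                       (.and (.eq (.var (fvar n')) (.var r1)) (conjStores C' D1 Rs)))))) φ1,
          R1, C', C', n' + 1)
  | appVar0 : Trans Rs M R C D φ (.fin k) n (r0, φ0, R0, C0, D0, n0) →
      R.filter (fun p => p.1.2 = arrowTag x.2) = [] →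
      Trans Rs (.appVar x M) R C D φ (.fin k) n
        (fvar n0, .and (.eq (.var (fvar n0)) .nil) φ0, R0, C0, D0, n0 + 1)
  | appVarT : Trans Rs M R C D φ (.fin k) n (r0, φ0, R0, C0, D0, n0) →
      R.filter (fun p => p.1.2 = arrowTag x.2) = ms →
      ms ≠ [] →
      TransList Rs r0 ms R0 C0 D0 φ0 (Bnd.fin k).pred n0 (outs, φn, Rn, Cn, nn) →
      updAll Cn Rs nn = (C', n') →
      Trans Rs (.appVar x M) R C D φ (.fin k) n
        (fvar n', .and (Fg r0 (fvar n') (mkPsi x (fvar n') C' Rs ms outs)) φn,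
          Rn, C', C', n' + 1)

/-- The iteration over the candidate methods m₁,…,mₙ in the `x M` case:
collects the pairs (retᵢ, Dᵢ), threading R, C, φ and the counter, while the
read map D stays fixed. -/
inductive TransList (Rs : List RName) :
    VName → List (MName × VName × Tm) → Rep → SSA → SSA → Form → Bnd → ℕ →
    List (VName × SSA) × Form × Rep × SSA × ℕ → Prop where
  | nil : TransList Rs r0 [] R C D φ k n ([], φ, R, C, n)
  | cons : Trans Rs (N.subst y (.var r0)) R C D φ k n (ri, φi, Ri, Ci, Di, ni) →
      TransList Rs r0 rest Ri Ci D φi k ni (outs, φ', R', C', n') →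
      TransList Rs r0 ((m, (y, N)) :: rest) R C D φ k n
        ((ri, Di) :: outs, φ', R', C', n')
end

/-- Applying an extended assignment to a term (closing substitution). -/
def subOut (σ : Assign) (y : VName) : Assign := fun z => if z = y then none else σ z

def Tm.asub (σ : Assign) : Tm → Tm
  | .var x => match σ x with | some ρ => ρ.toTm | none => .var x
  | .appVar x M =>
      match σ x with
      | some (.val (.meth m)) => .appMeth m (M.asub σ)
      | some (.val (.var y)) => .appVar y (M.asub σ)
      | some .fail => .appFail (M.asub σ)
      | some .nil => .appNil (M.asub σ)
      | some _ => .appVar x (M.asub σ)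
      | none => .appVar x (M.asub σ)
  | .assign r M => .assign r (M.asub σ)
  | .deref r => .deref r
  | .op M N => .op (M.asub σ) (N.asub σ)
  | .pair M N => .pair (M.asub σ) (N.asub σ)
  | .proj1 M => .proj1 (M.asub σ)
  | .proj2 M => .proj2 (M.asub σ)
  | .appMeth m M => .appMeth m (M.asub σ)
  | .appFail M => .appFail (M.asub σ)
  | .appNil M => .appNil (M.asub σ)
  | .ite B M1 M0 => .ite (B.asub σ) (M1.asub σ) (M0.asub σ)
  | .lett y M N => .lett y (M.asub σ) (N.asub (subOut σ y))
  | .letrec f y M N =>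
      .letrec f y (M.asub (subOut (subOut σ f) y)) (N.asub (subOut σ f))
  | .lam y τ M => .lam y τ (M.asub (subOut σ y))
  | M => M

/-- Applying an extended assignment to a repository. -/
def repAsub (σ : Assign) (R : Rep) : Rep :=
  R.map (fun p => (p.1, (p.2.1, Tm.asub (subOut σ p.2.1) p.2.2)))

/-- Reading the SSA map D as a store via σ. -/
def storeOf (D : SSA) (σ : Assign) : RName → Option Val := fun r =>
  match σ (D r) with
  | some (.val v) => some v
  | _ => none

def mkStore (Rs : List RName) (D : SSA) (σ : Assign) : Store :=
  Rs.filterMap (fun r => (storeOf D σ r).map (fun v => (r, v)))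

/-- A configuration is terminating if it evaluates to some result. -/
def Terminating (M : Tm) (R : Rep) (S : Store) (k : Bnd) : Prop :=
  ∃ χ R' S', Eval M R S k χ R' S'

/-- The initial SSA map C_S, mapping each reference r to the SSA variable r₀. -/
def initSSA : SSA := fun r => (2 * r.1 + 1, r.2)

/-- The initial axioms φ_S = ⋀_{r ∈ dom S} (r₀ = S(r)). -/
def phiS (S : Store) : Form :=
  S.foldr (fun p acc => .and (.eq (.var (initSSA p.1)) (valXp p.2)) acc) .tt

/-- The formula of(σ₀) representing a closing assignment σ₀. -/
def ofSig (σ₀ : List (VName × Val)) : Form :=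
  σ₀.foldr (fun p acc => .and (.eq (.var p.1) (valXp p.2)) acc) .tt

def asgnOf (σ₀ : List (VName × Val)) : Assign := fun x => (σ₀.lookup x).map Res.val

end HORef

namespace HORef

/-- The n-ary guarded decision tree ⋀_{m ∈ l} ((x = m) ⇒ body m). -/
def bigImp (x : VName) (body : MName → Form) (l : List MName) : Form :=
  l.foldr (fun m acc => .and (.imp (.eq (.var x) (.meth m)) (body m)) acc) .tt

/-! A sound points-to analysis pins the value of `x` to a method of `pt(x)` on every model of
the path condition, so each guard `x = m` with `m ∉ pt(x)` is false there and its clause of the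
decision tree holds vacuously. -/

theorem sat_eq_var_meth_iff (σ : Assign) (x : VName) (m : MName) :
    sat σ (.eq (.var x) (.meth m)) ↔ σ x = some (.val (.meth m)) := by
  simp [sat, evalXp]

theorem sat_bigImp_iff (σ : Assign) (x : VName) (body : MName → Form) (l : List MName) :
    sat σ (bigImp x body l) ↔
      ∀ m ∈ l, σ x = some (.val (.meth m)) → sat σ (body m) := by
  induction l with
  | nil => simp [bigImp, sat]
  | cons a l ih =>
    change (sat σ (.eq (.var x) (.meth a)) → sat σ (body a)) ∧ sat σ (bigImp x body l) ↔ _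
    rw [ih, List.forall_mem_cons, sat_eq_var_meth_iff]

theorem sat_bigImp_filter_iff (σ : Assign) (x : VName) (body : MName → Form)
    (l : List MName) (p : MName → Bool)
    (hx : ∀ m ∈ l, σ x = some (.val (.meth m)) → p m) :
    sat σ (bigImp x body (l.filter p)) ↔ sat σ (bigImp x body l) := by
  simp only [sat_bigImp_iff, List.mem_filter]
  exact ⟨fun h m hm hxm => h m ⟨hm, hx m hm hxm⟩ hxm, fun h m hm => h m hm.1⟩

/-- if the points-to analysis is sound — every method name that
can actually be the value of x under an assignment satisfying the path
condition lies in pt(x) ⊆ ms — then restricting the decision tree at an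
application x M from all repository methods ms of matching type to pt(x)
preserves satisfiability conjoined with the path condition. -/
theorem pt_restriction_sound (x : VName) (ms ptx : List MName)
    (body : MName → Form) (φpath : Form)
    (hsub : ∀ m ∈ ptx, m ∈ ms)
    (hsound : ∀ σ : Assign, sat σ φpath →
      ∃ m ∈ ptx, σ x = some (.val (.meth m))) :
    ∀ σ : Assign,
      sat σ (.and φpath (bigImp x body ms)) ↔
      sat σ (.and φpath (bigImp x body (ms.filter (· ∈ ptx)))) := by
  intro σ
  refine and_congr_right fun hpath => (sat_bigImp_filter_iff σ x body ms _ ?_).symm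
  obtain ⟨m₀, hm₀, hxm₀⟩ := hsound σ hpath
  intro m _ hxm
  obtain rfl : m = m₀ := by simpa [hxm] using hxm₀
  simpa using hm₀

end HORef
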